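/- arXiv:2207.11813 — 3 statements merged into one kernel-verified Lean document; each statement's English description precedes it below -/
import Mathlib

section
/- For every real number c > 0, the set of real numbers α for which there exists a positive integer k with 0 < dist(kα, ℤ) < e^{-ck} is an open and dense subset of ℝ. -/
/-!
Each condition on `α` is a strict inequality between continuous functions of `α`, so the set is
open. For density, given `α` and `k`, the point `β = (⌊kα⌋ + t) / k` lies within `1 / k` of `α`,
and for `0 ≤ t ≤ 1/2` the number `kβ = ⌊kα⌋ + t` is at distance exactly `t` from `ℤ`; taking `k`
large and `0 < t < e^{-ck}` gives points of the set arbitrarily close to `α`.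
-/

open Metric Set

lemma infDist_intCast_add_eq {m : ℤ} {t : ℝ} (ht₀ : 0 ≤ t) (ht : t ≤ 1 / 2) :
    infDist ((m : ℝ) + t) (range ((↑) : ℤ → ℝ)) = t := by
  refine le_antisymm ?_ ((le_infDist (range_nonempty _)).2 ?_)
  · simpa [Real.dist_eq, abs_of_nonneg ht₀] using
      infDist_le_dist_of_mem (x := (m : ℝ) + t) (mem_range_self (f := ((↑) : ℤ → ℝ)) m)
  · rintro _ ⟨n, rfl⟩
    rw [Real.dist_eq]
    rcases le_or_gt n m with hnm | hmn
    · have : (n : ℝ) ≤ m := by exact_mod_cast hnm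
      rw [abs_of_nonneg (by linarith)]
      linarith
    · have : (m : ℝ) + 1 ≤ n := by exact_mod_cast hmn
      rw [abs_of_nonpos (by linarith)]
      linarith

lemma abs_floor_mul_add_div_sub_lt {k : ℝ} (hk : 0 < k) (α : ℝ) {t : ℝ} (ht₀ : 0 ≤ t)
    (ht₁ : t < 1) : |(⌊k * α⌋ + t) / k - α| < 1 / k := by
  have h₁ := Int.floor_le (k * α)
  have h₂ := Int.lt_floor_add_one (k * α)
  rw [show (⌊k * α⌋ + t) / k - α = (⌊k * α⌋ + t - k * α) / k by field_simp, abs_div,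
    abs_of_pos hk, div_lt_div_iff_of_pos_right hk, abs_lt]
  constructor <;> linarith

theorem isOpen_setOf_exists_infDist_mul_lt (s : Set ℝ) (f : ℕ → ℝ) :
    IsOpen {α : ℝ | ∃ k : ℕ, 0 < k ∧ 0 < infDist ((k : ℝ) * α) s ∧
      infDist ((k : ℝ) * α) s < f k} := by
  simp only [ofPred_exists]
  refine isOpen_iUnion fun k => ?_
  have hd : Continuous fun α : ℝ => infDist ((k : ℝ) * α) s :=
    (continuous_infDist_pt s).comp (continuous_const_mul _)
  exact isOpen_const.and ((isOpen_lt continuous_const hd).and (isOpen_lt hd continuous_const))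

theorem dense_setOf_exists_infDist_intCast_lt (f : ℕ → ℝ) (hf : ∀ k, 0 < f k) :
    Dense {α : ℝ | ∃ k : ℕ, 0 < k ∧ 0 < infDist ((k : ℝ) * α) (range ((↑) : ℤ → ℝ)) ∧
      infDist ((k : ℝ) * α) (range ((↑) : ℤ → ℝ)) < f k} := by
  rw [Metric.dense_iff]
  intro α ε hε
  obtain ⟨n, hn⟩ := exists_nat_one_div_lt hε
  have hk : (0 : ℝ) < (n + 1 : ℕ) := by positivity
  set k := n + 1
  set t := min (f k / 2) (1 / 2)
  have ht₀ : 0 < t := lt_min (half_pos (hf k)) one_half_pos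
  have hdist : infDist ((k : ℝ) * ((⌊(k : ℝ) * α⌋ + t) / k)) (range ((↑) : ℤ → ℝ)) = t := by
    rw [mul_div_cancel₀ _ hk.ne']
    exact infDist_intCast_add_eq ht₀.le (min_le_right _ _)
  refine ⟨(⌊(k : ℝ) * α⌋ + t) / k, ?_, k, n.succ_pos, by rwa [hdist], ?_⟩
  · rw [mem_ball, Real.dist_eq]
    calc _ < 1 / (k : ℝ) :=
          abs_floor_mul_add_div_sub_lt hk α ht₀.le ((min_le_right _ _).trans_lt one_half_lt_one)
      _ < ε := by simpa [k] using hn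
  · rw [hdist]
    exact (min_le_left _ _).trans_lt (half_lt_self (hf k))

theorem exp_liouville_approx_set_isOpen_and_dense_general (c : ℝ) :
    IsOpen {α : ℝ | ∃ k : ℕ, 0 < k ∧
        0 < Metric.infDist ((k : ℝ) * α) (Set.range ((↑) : ℤ → ℝ)) ∧
        Metric.infDist ((k : ℝ) * α) (Set.range ((↑) : ℤ → ℝ)) < Real.exp (-(c * k))} ∧
    Dense {α : ℝ | ∃ k : ℕ, 0 < k ∧
        0 < Metric.infDist ((k : ℝ) * α) (Set.range ((↑) : ℤ → ℝ)) ∧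
        Metric.infDist ((k : ℝ) * α) (Set.range ((↑) : ℤ → ℝ)) < Real.exp (-(c * k))} :=
  ⟨isOpen_setOf_exists_infDist_mul_lt _ _,
    dense_setOf_exists_infDist_intCast_lt _ fun _ => Real.exp_pos _⟩

/-- For every `c > 0`, the set of real numbers `α` for which there exists a positive
integer `k` with `0 < dist (k • α, ℤ) < e ^ (-c * k)` is open and dense in `ℝ`.
Here the distance from `x` to `ℤ` is `Metric.infDist x (Set.range ((↑) : ℤ → ℝ))`. -/
theorem exp_liouville_approx_set_isOpen_and_dense (c : ℝ) (hc : 0 < c) :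
    IsOpen {α : ℝ | ∃ k : ℕ, 0 < k ∧
        0 < Metric.infDist ((k : ℝ) * α) (Set.range ((↑) : ℤ → ℝ)) ∧
        Metric.infDist ((k : ℝ) * α) (Set.range ((↑) : ℤ → ℝ)) < Real.exp (-(c * k))} ∧
    Dense {α : ℝ | ∃ k : ℕ, 0 < k ∧
        0 < Metric.infDist ((k : ℝ) * α) (Set.range ((↑) : ℤ → ℝ)) ∧
        Metric.infDist ((k : ℝ) * α) (Set.range ((↑) : ℤ → ℝ)) < Real.exp (-(c * k))} :=
  exp_liouville_approx_set_isOpen_and_dense_general c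
end

section
/- The set 𝓛* of exponentially Liouville real numbers, i.e. the set of α ∈ ℝ such that for every c > 0 there exists a positive integer k with 0 < dist(kα, ℤ) < e^{-ck}, is a residual (comeagre) subset of ℝ: it contains a countable intersection of open dense sets. -/
/-!
For a fixed error function `ψ` with positive values, the set of `α` admitting some `k ≥ 1` with
`0 < dist (k α, ℤ) < ψ k` is open (a union of sets cut out by strict inequalities between
continuous functions) and dense: near any `x`, with `k` large and `0 < δ < min (ψ k) (1/2)`, the
point `(⌊k x⌋ + δ) / k` lies within `1 / k` of `x` and satisfies `dist (k α, ℤ) = δ`. The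
exponentially Liouville numbers contain the intersection of these sets over `ψ k = e^{-n k}`,
`n ∈ ℕ`, a countable intersection of open dense sets.
-/

open Metric Set Real

theorem infDist_range_intCast_eq_abs_sub_round (x : ℝ) :
    infDist x (range ((↑) : ℤ → ℝ)) = |x - round x| := by
  apply le_antisymm
  · simpa [Real.dist_eq] using infDist_le_dist_of_mem (x := x) (mem_range_self (round x))
  · rw [le_infDist (range_nonempty _)]
    rintro _ ⟨z, rfl⟩
    exact (round_le x z).trans_eq (Real.dist_eq x z).symm

theorem infDist_intCast_add_eq_s1 {δ : ℝ} (m : ℤ) (hδ₀ : 0 ≤ δ) (hδ₁ : δ < 1 / 2) :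
    infDist (m + δ) (range ((↑) : ℤ → ℝ)) = δ := by
  have hround : round δ = 0 := round_eq_zero_iff.mpr ⟨by linarith, hδ₁⟩
  rw [infDist_range_intCast_eq_abs_sub_round, round_intCast_add, hround, add_zero,
    add_sub_cancel_left, abs_of_nonneg hδ₀]

def psiApproximable (ψ : ℕ → ℝ) : Set ℝ :=
  {α | ∃ k : ℕ, 0 < k ∧ 0 < infDist ((k : ℝ) * α) (range ((↑) : ℤ → ℝ)) ∧
    infDist ((k : ℝ) * α) (range ((↑) : ℤ → ℝ)) < ψ k}

theorem psiApproximable_mono {ψ ψ' : ℕ → ℝ} (h : ψ ≤ ψ') :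
    psiApproximable ψ ⊆ psiApproximable ψ' := by
  rintro α ⟨k, hk, hpos, hlt⟩
  exact ⟨k, hk, hpos, hlt.trans_le (h k)⟩

theorem isOpen_psiApproximable (ψ : ℕ → ℝ) : IsOpen (psiApproximable ψ) := by
  simp only [psiApproximable, ofPred_exists, ofPred_and]
  refine isOpen_iUnion fun k => isOpen_const.inter ?_
  have hcont : Continuous fun α : ℝ => infDist ((k : ℝ) * α) (range ((↑) : ℤ → ℝ)) :=
    (continuous_infDist_pt _).comp (continuous_const_mul _)
  exact (isOpen_lt continuous_const hcont).inter (isOpen_lt hcont continuous_const)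

theorem dense_psiApproximable {ψ : ℕ → ℝ} (hψ : ∀ k, 0 < ψ k) :
    Dense (psiApproximable ψ) := by
  rw [Metric.dense_iff]
  intro x r hr
  obtain ⟨k, hk⟩ := exists_nat_gt (1 / r)
  have hkR : (0 : ℝ) < k := (one_div_pos.mpr hr).trans hk
  obtain ⟨δ, hδ₀, hδψ, hδ₁⟩ : ∃ δ : ℝ, 0 < δ ∧ δ < ψ k ∧ δ < 1 / 2 :=
    ⟨min (ψ k) (1 / 2) / 2, half_pos (lt_min (hψ k) one_half_pos),
      by linarith [min_le_left (ψ k) (1 / 2), hψ k], by linarith [min_le_right (ψ k) (1 / 2)]⟩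
  have hkβ : (k : ℝ) * ((⌊(k : ℝ) * x⌋ + δ) / k) = ⌊(k : ℝ) * x⌋ + δ :=
    mul_div_cancel₀ _ hkR.ne'
  refine ⟨(⌊(k : ℝ) * x⌋ + δ) / k, ?_, k, Nat.cast_pos.mp hkR, ?_⟩
  · have h₁ := Int.floor_le ((k : ℝ) * x)
    have h₂ := Int.sub_one_lt_floor ((k : ℝ) * x)
    have hdiff : (⌊(k : ℝ) * x⌋ + δ) / k - x = (⌊(k : ℝ) * x⌋ + δ - k * x) / k := by
      field_simp
    have hkr : 1 < r * k := by rwa [div_lt_iff₀ hr, mul_comm] at hk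
    rw [mem_ball, Real.dist_eq, hdiff, abs_div, abs_of_pos hkR, div_lt_iff₀ hkR,
      abs_lt]
    constructor <;> linarith
  · rw [hkβ, infDist_intCast_add_eq_s1 _ hδ₀.le hδ₁]
    exact ⟨hδ₀, hδψ⟩

theorem psiApproximable_mem_residual {ψ : ℕ → ℝ} (hψ : ∀ k, 0 < ψ k) :
    psiApproximable ψ ∈ residual ℝ :=
  residual_of_dense_open (isOpen_psiApproximable ψ) (dense_psiApproximable hψ)

/-- The set `𝓛*` of exponentially Liouville real numbers, i.e. the set of `α : ℝ` such that
for every `c > 0` there is a positive integer `k` with `0 < dist (k • α, ℤ) < e ^ (-c * k)`,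
is residual (comeagre) in `ℝ`. Here the distance from `x` to `ℤ` is
`Metric.infDist x (Set.range ((↑) : ℤ → ℝ))`. -/
theorem exp_liouville_residual :
    {α : ℝ | ∀ c : ℝ, 0 < c → ∃ k : ℕ, 0 < k ∧
        0 < Metric.infDist ((k : ℝ) * α) (Set.range ((↑) : ℤ → ℝ)) ∧
        Metric.infDist ((k : ℝ) * α) (Set.range ((↑) : ℤ → ℝ)) < Real.exp (-(c * k))}
      ∈ residual ℝ := by
  have hres : ∀ n : ℕ, psiApproximable (fun k => exp (-(n * k))) ∈ residual ℝ :=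
    fun n => psiApproximable_mem_residual fun _ => exp_pos _
  filter_upwards [countable_iInter_mem.mpr hres] with α hα c _
  obtain ⟨n, hcn⟩ := exists_nat_gt c
  refine psiApproximable_mono (fun k => exp_le_exp.mpr ?_) (mem_iInter.mp hα n)
  have hk : (0 : ℝ) ≤ k := k.cast_nonneg
  nlinarith
end

section
/- Fix a positive integer k. The set of vectors α = (α₁, …, α_k) ∈ ℝ^k such that for every c > 0 there exists a positive integer n with 0 < max_{1 ≤ i ≤ k} dist(nα_i, ℤ) < e^{-cn} is a residual (comeagre) subset of ℝ^k. -/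
/-! For each `c`, the set of `α` with `0 < ‖n α‖ < e^{-cn}` for some `n > 0` is open, since
`‖n α‖` is continuous in `α`, and dense: any `α` is within `1/q` of `β = (⌊q α⌋ + t) / q`,
for which `‖q β‖ = t` can be chosen in `(0, e^{-cq})`. The exponentially Liouville points are
the intersection of these sets over `c ∈ ℕ`, hence residual by Baire. -/

open Metric Set Filter Real

section

variable {ι : Type*}

lemma infDist_intCast_add (m : ℤ) {t : ℝ} (ht₀ : 0 ≤ t) (ht : t ≤ 1 / 2) :
    infDist (m + t) (range ((↑) : ℤ → ℝ)) = t := by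
  refine le_antisymm ?_ ((le_infDist (range_nonempty _)).2 ?_)
  · simpa [Real.dist_eq, abs_of_nonneg ht₀] using
      infDist_le_dist_of_mem (x := m + t) (mem_range_self (f := ((↑) : ℤ → ℝ)) m)
  · rintro _ ⟨j, rfl⟩
    rw [Real.dist_eq]
    rcases le_or_gt j m with hj | hj
    · have : (j : ℝ) ≤ m := by exact_mod_cast hj
      exact le_abs.2 (Or.inl (by linarith))
    · have : (m : ℝ) + 1 ≤ j := by exact_mod_cast hj
      exact le_abs.2 (Or.inr (by linarith))

noncomputable def torusNorm (α : ι → ℝ) : ℝ :=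
  ⨆ i, infDist (α i) (range ((↑) : ℤ → ℝ))

lemma torusNorm_intCast_add [Nonempty ι] (m : ι → ℤ) {t : ℝ} (ht₀ : 0 ≤ t) (ht : t ≤ 1 / 2) :
    torusNorm (fun i ↦ (m i : ℝ) + t) = t := by
  simp only [torusNorm, infDist_intCast_add _ ht₀ ht, ciSup_const]

lemma continuous_torusNorm [Fintype ι] [Nonempty ι] : Continuous (torusNorm (ι := ι)) := by
  have : torusNorm (ι := ι) = fun α ↦ Finset.univ.sup' Finset.univ_nonempty
      fun i ↦ infDist (α i) (range ((↑) : ℤ → ℝ)) :=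
    funext fun α ↦ (Finset.sup'_univ_eq_ciSup _).symm
  rw [this]
  exact Continuous.finset_sup'_apply _ fun i _ ↦ (continuous_infDist_pt _).comp (continuous_apply i)

lemma dist_floor_add_div_lt [Fintype ι] (α : ι → ℝ) {q t : ℝ} (hq : 0 < q) (ht₀ : 0 ≤ t)
    (ht : t ≤ 1 / 2) : dist (fun i ↦ (⌊q * α i⌋ + t) / q) α < 1 / q := by
  refine (dist_pi_lt_iff (by positivity)).2 fun i ↦ ?_
  have hfloor := Int.floor_le (q * α i)
  have hfloor' := Int.lt_floor_add_one (q * α i)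
  rw [Real.dist_eq, div_sub' hq.ne', abs_div, abs_of_pos hq, div_lt_div_iff_of_pos_right hq,
    abs_lt]
  constructor <;> linarith

def expApproxSet (c : ℝ) : Set (ι → ℝ) :=
  {α | ∃ n : ℕ, 0 < n ∧ 0 < torusNorm ((n : ℝ) • α) ∧ torusNorm ((n : ℝ) • α) < exp (-(c * n))}

lemma expApproxSet_anti : Antitone (expApproxSet (ι := ι)) := by
  rintro c c' hc α ⟨n, hn, hpos, hlt⟩
  refine ⟨n, hn, hpos, hlt.trans_le (exp_le_exp.2 ?_)⟩
  have : c * n ≤ c' * n := by gcongr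
  linarith

lemma isOpen_expApproxSet [Fintype ι] [Nonempty ι] (c : ℝ) : IsOpen (expApproxSet (ι := ι) c) := by
  have : expApproxSet c =
      ⋃ n : ℕ, ⋃ _ : 0 < n, (fun α : ι → ℝ ↦ torusNorm ((n : ℝ) • α)) ⁻¹' Ioo 0 (exp (-(c * n))) := by
    ext α
    simp only [expApproxSet, mem_ofPred_eq, mem_iUnion, mem_preimage, mem_Ioo, exists_prop]
  rw [this]
  exact isOpen_iUnion fun n ↦ isOpen_iUnion fun _ ↦ isOpen_Ioo.preimage <|
    continuous_torusNorm.comp (continuous_const_smul _)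

lemma dense_expApproxSet [Fintype ι] [Nonempty ι] {c : ℝ} (hc : 0 ≤ c) :
    Dense (expApproxSet (ι := ι) c) := by
  refine Metric.dense_iff.2 fun α r hr ↦ ?_
  obtain ⟨q, hq⟩ := exists_nat_gt (1 / r)
  have hq₀ : (0 : ℝ) < q := (one_div_pos.2 hr).trans hq
  have hE : exp (-(c * q)) ≤ 1 := exp_le_one_iff.2 (by nlinarith)
  set t := exp (-(c * q)) / 2 with ht_def
  have ht₀ : 0 < t := by positivity
  have ht : t ≤ 1 / 2 := by linarith
  refine ⟨fun i ↦ (⌊q * α i⌋ + t) / q, ?_, q, by exact_mod_cast hq₀, ?_⟩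
  · exact (dist_floor_add_div_lt α hq₀ ht₀.le ht).trans ((one_div_lt hr hq₀).1 hq)
  · have : (q : ℝ) • (fun i ↦ (⌊q * α i⌋ + t) / q) = fun i ↦ (⌊q * α i⌋ : ℝ) + t := by
      ext i
      simp [mul_div_cancel₀ _ hq₀.ne']
    rw [this, torusNorm_intCast_add _ ht₀.le ht]
    exact ⟨ht₀, by linarith [exp_pos (-(c * q))]⟩

end

/-- For a fixed positive integer `k`, the set of vectors `α ∈ ℝ^k` such that for every
`c > 0` there exists a positive integer `n` with
`0 < max_{1 ≤ i ≤ k} dist (n • α i, ℤ) < e ^ (-c * n)` is residual (comeagre) in `ℝ^k`.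
The maximum over the finitely many coordinates is expressed as a supremum over `Fin k`,
and the distance from `x : ℝ` to `ℤ` is `Metric.infDist x (Set.range ((↑) : ℤ → ℝ))`. -/
theorem exp_liouville_residual_torus (k : ℕ) (hk : 0 < k) :
    {α : Fin k → ℝ | ∀ c : ℝ, 0 < c → ∃ n : ℕ, 0 < n ∧
        0 < (⨆ i : Fin k, Metric.infDist ((n : ℝ) * α i) (Set.range ((↑) : ℤ → ℝ))) ∧
        (⨆ i : Fin k, Metric.infDist ((n : ℝ) * α i) (Set.range ((↑) : ℤ → ℝ)))
          < Real.exp (-(c * n))}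
      ∈ residual (Fin k → ℝ) := by
  have : Nonempty (Fin k) := ⟨⟨0, hk⟩⟩
  have hres : (⋂ m : ℕ, expApproxSet (ι := Fin k) (m + 1)) ∈ residual (Fin k → ℝ) :=
    countable_iInter_mem.2 fun m ↦
      residual_of_dense_open (isOpen_expApproxSet _) (dense_expApproxSet (by positivity))
  refine mem_of_superset hres fun α hα c _ ↦ ?_
  obtain ⟨m, hm⟩ := exists_nat_gt c
  exact expApproxSet_anti (by linarith) (mem_iInter.1 hα m)
end
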